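/- If γ₁ = a₁/q₁ < γ₂ = a₂/q₂ are consecutive elements of 𝔖𝔉_Q (both in 𝔖𝔉_Q, adjacent when also regarded inside F_Q, i.e., consecutive in F_Q), then q₂ < q₁; in particular q₁ > Q/2. -/

import Mathlib

/-!
Two Farey neighbours satisfy `Q < q₁ + q₂` (otherwise their mediant would lie between them) and
`a₂ q₁ - a₁ q₂ = 1`. The latter says that `q₁` is an inverse of `a₂` modulo `q₂`. If `q₁ ≤ q₂`,
uniqueness of inverses modulo `q₂` forces `ā₂ = q₁`, and then `h(a₂/q₂) = q₂ + a₂ + q₁ > Q`.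
Hence `q₂ < q₁`, and `Q < q₁ + q₂ < 2 q₁`.
-/

/-- `a₁/q₁ < a₂/q₂` are consecutive elements of the Farey sequence of order `Q`. -/
def FareyConsec (Q a₁ q₁ a₂ q₂ : ℤ) : Prop :=
  0 < q₁ ∧ q₁ ≤ Q ∧ 0 < q₂ ∧ q₂ ≤ Q ∧ 0 ≤ a₁ ∧ a₁ ≤ q₁ ∧ 0 ≤ a₂ ∧ a₂ ≤ q₂ ∧
  Int.gcd a₁ q₁ = 1 ∧ Int.gcd a₂ q₂ = 1 ∧ (a₁ : ℚ) / q₁ < (a₂ : ℚ) / q₂ ∧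
  ∀ c d : ℤ, 0 < d → d ≤ Q → ¬((a₁ : ℚ) / q₁ < (c : ℚ) / d ∧ (c : ℚ) / d < (a₂ : ℚ) / q₂)

theorem Int.exists_mul_sub_mul_eq_one_mem_Ioc {a q : ℤ} (hq : 0 < q) (hg : Int.gcd a q = 1)
    (Q : ℤ) : ∃ x, ∃ y ∈ Set.Ioc (Q - q) Q, q * x - a * y = 1 := by
  obtain ⟨u, v, huv⟩ := Int.isCoprime_iff_gcd_eq_one.mpr hg
  have hdiv := Int.mul_ediv_add_emod (Q + u) q
  have hr0 := Int.emod_nonneg (Q + u) hq.ne'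
  have hrq := Int.emod_lt_of_pos (Q + u) hq
  -- shift the particular solution `(v, -u)` by `(Q + u) / q` periods `(a, q)`
  refine ⟨v + (Q + u) / q * a, Q - (Q + u) % q, ⟨by omega, by omega⟩, ?_⟩
  linear_combination huv + a * hdiv

theorem Int.eq_of_mul_modEq_one {a b b' n : ℤ} (hb : a * b ≡ 1 [ZMOD n])
    (hb' : a * b' ≡ 1 [ZMOD n]) (hlt : |b - b'| < n) : b = b' := by
  have hmod : b ≡ b' [ZMOD n] :=
    calc b = b * 1 := (mul_one b).symm
      _ ≡ b * (a * b') [ZMOD n] := hb'.symm.mul_left b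
      _ = a * b * b' := by ring
      _ ≡ 1 * b' [ZMOD n] := hb.mul_right b'
      _ = b' := one_mul b'
  have := Int.eq_zero_of_abs_lt_dvd (Int.ModEq.dvd hmod.symm) hlt
  omega

namespace FareyConsec

variable {Q a₁ q₁ a₂ q₂ : ℤ}

theorem right_le_of_left_lt (h : FareyConsec Q a₁ q₁ a₂ q₂) {c d : ℤ} (hd : 0 < d)
    (hdQ : d ≤ Q) (hleft : a₁ * d < c * q₁) : a₂ * d ≤ c * q₂ := by
  obtain ⟨hq₁, -, hq₂, -, -, -, -, -, -, -, -, hmid⟩ := h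
  have hleft' : (a₁ : ℚ) / q₁ < c / d := by
    rw [div_lt_div_iff₀ (by exact_mod_cast hq₁) (by exact_mod_cast hd)]
    exact_mod_cast hleft
  have hright : (a₂ : ℚ) / q₂ ≤ c / d := not_lt.mp fun hlt => hmid c d hd hdQ ⟨hleft', hlt⟩
  rw [div_le_div_iff₀ (by exact_mod_cast hq₂) (by exact_mod_cast hd)] at hright
  exact_mod_cast hright

theorem cross_lt (h : FareyConsec Q a₁ q₁ a₂ q₂) : a₁ * q₂ < a₂ * q₁ := by
  obtain ⟨hq₁, -, hq₂, -, -, -, -, -, -, -, hlt, -⟩ := h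
  rw [div_lt_div_iff₀ (by exact_mod_cast hq₁) (by exact_mod_cast hq₂)] at hlt
  exact_mod_cast hlt

theorem lt_add (h : FareyConsec Q a₁ q₁ a₂ q₂) : Q < q₁ + q₂ := by
  by_contra! hle
  have hcross := h.cross_lt
  have hmediant := h.right_le_of_left_lt (c := a₁ + a₂) (by linarith [h.1, h.2.2.1]) hle
    (by linarith)
  linarith

theorem det_eq_one (h : FareyConsec Q a₁ q₁ a₂ q₂) : a₂ * q₁ - a₁ * q₂ = 1 := by
  have ⟨hq₁, hq₁Q, _, hq₂Q, _, _, _, _, hg₁, hg₂, _⟩ := h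
  have hdet_pos : 0 < a₂ * q₁ - a₁ * q₂ := by linarith [h.cross_lt]
  obtain ⟨x, y, ⟨hy_gt, hy_le⟩, hxy⟩ := Int.exists_mul_sub_mul_eq_one_mem_Ioc hq₁ hg₁ Q
  have hy : 0 < y := by omega
  -- `x / y` lies to the right of `a₁ / q₁`, hence not to the left of `a₂ / q₂`
  have hE : 0 ≤ x * q₂ - a₂ * y := by
    linarith [h.right_le_of_left_lt hy hy_le (by linarith : a₁ * y < x * q₁)]
  have hsplit : q₂ = q₁ * (x * q₂ - a₂ * y) + y * (a₂ * q₁ - a₁ * q₂) := by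
    linear_combination (-q₂) * hxy
  -- otherwise `q₂ ≥ q₁ + y > Q`
  have hE0 : x * q₂ - a₂ * y = 0 := by
    by_contra hne
    have hE1 : 1 ≤ x * q₂ - a₂ * y := by omega
    nlinarith
  have hdvd_a : a₂ * q₁ - a₁ * q₂ ∣ a₂ := ⟨x, by linear_combination -a₂ * hxy + a₁ * hE0⟩
  have hdvd_q : a₂ * q₁ - a₁ * q₂ ∣ q₂ := ⟨y, by linear_combination -q₂ * hxy + q₁ * hE0⟩
  have hdvd_one := Int.dvd_coe_gcd hdvd_a hdvd_q
  rw [hg₂, Nat.cast_one] at hdvd_one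
  exact Int.eq_one_of_dvd_one hdet_pos.le hdvd_one

theorem mul_modEq_one (h : FareyConsec Q a₁ q₁ a₂ q₂) : a₂ * q₁ ≡ 1 [ZMOD q₂] :=
  Int.modEq_iff_dvd.mpr ⟨-a₁, by linear_combination -h.det_eq_one⟩

end FareyConsec

theorem stmt_14_general (Q a₁ q₁ a₂ q₂ ab₂ : ℤ)
    (hcons : FareyConsec Q a₁ q₁ a₂ q₂)
    (hj1 : 1 ≤ ab₂) (hinv2 : a₂ * ab₂ ≡ 1 [ZMOD q₂])
    (hh2 : q₂ + a₂ + ab₂ ≤ Q) :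
    q₂ < q₁ ∧ Q < 2 * q₁ := by
  have hQ := hcons.lt_add
  have ⟨hq₁, _, _, _, _, _, ha₂, _⟩ := hcons
  have hq : q₂ < q₁ := by
    by_contra! hle
    have hinv_eq : ab₂ = q₁ :=
      Int.eq_of_mul_modEq_one hinv2 hcons.mul_modEq_one (abs_lt.mpr ⟨by omega, by omega⟩)
    omega
  exact ⟨hq, by omega⟩

theorem stmt_14 (Q a₁ q₁ a₂ q₂ ab₁ ab₂ : ℤ) (hQ : 1 ≤ Q)
    (hcons : FareyConsec Q a₁ q₁ a₂ q₂)
    (ha₁ : 0 < a₁) (ha₁q : a₁ < q₁) (ha₂ : 0 < a₂) (ha₂q : a₂ < q₂)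
    (hi1 : 1 ≤ ab₁) (hi2 : ab₁ < q₁) (hinv1 : a₁ * ab₁ ≡ 1 [ZMOD q₁])
    (hj1 : 1 ≤ ab₂) (hj2 : ab₂ < q₂) (hinv2 : a₂ * ab₂ ≡ 1 [ZMOD q₂])
    (hh1 : q₁ + a₁ + ab₁ ≤ Q) (hh2 : q₂ + a₂ + ab₂ ≤ Q) :
    q₂ < q₁ ∧ Q < 2 * q₁ :=
  stmt_14_general Q a₁ q₁ a₂ q₂ ab₂ hcons hj1 hinv2 hh2
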